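/- Let (G,H) be a CSS pair with adapted dual H*, let K ≥ 0 and 0 ≤ p ≤ 1, and set C = e^{−2K}(1−p) + e^{2K}p. Then the disorder-averaged homological difference is bounded by a sum over nontrivial codewords: [ΔF_e(G,H;K)]_p ≤ Σ_{c ∈ F₂ⁿ : H cᵀ = 0 and c ∉ rowspace(G)} C^{|c|}. -/

import Mathlib

open Matrix Filter

/-- Partition function `Z_e(G;K)` of the random-bond Ising model in Wegner's form. -/
noncomputable def Zf {ρ : Type*} [Fintype ρ] [DecidableEq ρ] {n : ℕ}
    (G : Matrix ρ (Fin n) (ZMod 2)) (e : Fin n → ZMod 2) (K : ℝ) : ℝ :=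
  ∑ α : ρ → ZMod 2,
    Real.exp (K * ∑ b : Fin n, (-1 : ℝ) ^ ((e b).val + ((Matrix.vecMul α G) b).val))

/-- `Hs` is an adapted dual of `H`: it stacks `G` on top of `k` extra rows, and its
row space equals `C_H^⊥ = {c | H cᵀ = 0}`. -/
def IsAdaptedDual {rG rH k n : ℕ} (G : Matrix (Fin rG) (Fin n) (ZMod 2))
    (H : Matrix (Fin rH) (Fin n) (ZMod 2))
    (Hs : Matrix (Fin rG ⊕ Fin k) (Fin n) (ZMod 2)) : Prop :=
  (∀ i, Hs (Sum.inl i) = G i) ∧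
  LinearMap.range Hs.vecMulLinear = LinearMap.ker H.mulVecLin

/-- Homological difference `ΔF_e(G,H;K) = ln Z_e(H*;K) − ln Z_e(G;K)`. -/
noncomputable def deltaF {ρ ρ' : Type*} [Fintype ρ] [DecidableEq ρ] [Fintype ρ'] [DecidableEq ρ'] {n : ℕ}
    (G : Matrix ρ (Fin n) (ZMod 2)) (Hs : Matrix ρ' (Fin n) (ZMod 2))
    (e : Fin n → ZMod 2) (K : ℝ) : ℝ :=
  Real.log (Zf Hs e K) - Real.log (Zf G e K)

/-- Disorder average `[X_e]_p = Σ_e p^{|e|}(1−p)^{n−|e|} X_e`. -/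
noncomputable def davg {n : ℕ} (p : ℝ) (X : (Fin n → ZMod 2) → ℝ) : ℝ :=
  ∑ e : Fin n → ZMod 2, p ^ hammingNorm e * (1 - p) ^ (n - hammingNorm e) * X e

/-- Average success probability of maximum-likelihood decoding. -/
noncomputable def Psucc {ρ ρ' : Type*} [Fintype ρ] [DecidableEq ρ] [Fintype ρ'] [DecidableEq ρ'] {n : ℕ}
    (G : Matrix ρ (Fin n) (ZMod 2)) (Hs : Matrix ρ' (Fin n) (ZMod 2))
    (K p : ℝ) : ℝ :=
  davg p (fun e => Zf G e K / Zf Hs e K)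

/-- CSS distance `d_G`: minimum Hamming weight of a vector `c` with `H cᵀ = 0`
that is not in the row space of `G`. -/
noncomputable def dCSS {rG rH n : ℕ} (G : Matrix (Fin rG) (Fin n) (ZMod 2))
    (H : Matrix (Fin rH) (Fin n) (ZMod 2)) : ℕ :=
  sInf {w | ∃ c : Fin n → ZMod 2,
    H.mulVec c = 0 ∧ (¬ ∃ α, Matrix.vecMul α G = c) ∧ hammingNorm c = w}


open Finset

/-! Both partition functions are sums of the Boltzmann weight `w` over a coset: `Z_e(G)` over
`e + rowspace G` and `Z_e(H*)` over `e + C_H^⊥`, each term counted as often as the kernel of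
`α ↦ α M` is large. The dimension count `k = n - rank G - rank H` makes the two kernels equally
large, so `Z_e(H*) / Z_e(G)` is a ratio of sums over nested sets; `ln x ≤ x - 1` and
`Z_e(G) ≥ w(e)` (up to that common factor) then give `ΔF_e ≤ Σ_c w(e + c) / w(e)` over the
nontrivial codewords `c`. Each ratio `w(e + c) / w(e)` factorizes over the sites, and under the
product measure every site in the support of `c` contributes the factor `C`. -/

theorem ZMod.neg_one_pow_val_add {R : Type*} [Ring R] (x y : ZMod 2) :
    (-1 : R) ^ (x + y).val = (-1) ^ x.val * (-1) ^ y.val := by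
  rw [ZMod.val_add, ← neg_one_pow_eq_pow_mod_two, pow_add]

theorem AddMonoidHom.sum_comp_eq_card_ker_nsmul {A B M : Type*} [AddGroup A] [Fintype A]
    [AddGroup B] [DecidableEq B] [AddCommMonoid M] (φ : A →+ B) (f : B → M) :
    ∑ x, f (φ x) = Nat.card φ.ker • ∑ y ∈ univ.image φ, f y := by
  rw [Finset.sum_comp, Finset.smul_sum]
  refine Finset.sum_congr rfl fun y hy => ?_
  obtain ⟨x, -, rfl⟩ := Finset.mem_image.mp hy
  rw [AddMonoidHom.card_fiber_eq_of_mem_range φ ⟨x, rfl⟩ ⟨0, map_zero φ⟩]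
  simp [Nat.card_eq_fintype_card, Fintype.card_subtype]

theorem Real.log_sum_div_sum_le {ι : Type*} [DecidableEq ι] {s t : Finset ι} {f : ι → ℝ}
    (hst : s ⊆ t) (hf : ∀ i ∈ t, 0 < f i) {a : ι} (ha : a ∈ s) :
    Real.log ((∑ i ∈ t, f i) / ∑ i ∈ s, f i) ≤ ∑ i ∈ t \ s, f i / f a := by
  have hfa : 0 < f a := hf a (hst ha)
  have hfa_le : f a ≤ ∑ i ∈ s, f i :=
    Finset.single_le_sum (fun i hi => (hf i (hst hi)).le) ha
  have hs : 0 < ∑ i ∈ s, f i := hfa.trans_le hfa_le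
  have hsplit : ∑ i ∈ t, f i = ∑ i ∈ s, f i + ∑ i ∈ t \ s, f i := by
    rw [add_comm, Finset.sum_sdiff hst]
  have hrest : 0 ≤ ∑ i ∈ t \ s, f i :=
    Finset.sum_nonneg fun i hi => (hf i (Finset.sdiff_subset hi)).le
  rw [← Finset.sum_div]
  calc Real.log ((∑ i ∈ t, f i) / ∑ i ∈ s, f i)
      ≤ (∑ i ∈ t, f i) / (∑ i ∈ s, f i) - 1 :=
        Real.log_le_sub_one_of_pos (div_pos (by linarith) hs)
    _ = (∑ i ∈ t \ s, f i) / ∑ i ∈ s, f i := by rw [hsplit]; field_simp; ring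
    _ ≤ (∑ i ∈ t \ s, f i) / f a := div_le_div_of_nonneg_left hrest hfa hfa_le

section

variable {n : ℕ}

noncomputable def boltzmannWeight (K : ℝ) (v : Fin n → ZMod 2) : ℝ :=
  Real.exp (K * ∑ b, (-1 : ℝ) ^ (v b).val)

theorem boltzmannWeight_pos (K : ℝ) (v : Fin n → ZMod 2) : 0 < boltzmannWeight K v :=
  Real.exp_pos _

theorem boltzmannWeight_add_div (K : ℝ) (e c : Fin n → ZMod 2) :
    boltzmannWeight K (e + c) / boltzmannWeight K e =
      ∏ b, Real.exp (K * ((-1) ^ (e b + c b).val - (-1) ^ (e b).val)) := by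
  rw [boltzmannWeight, boltzmannWeight, ← Real.exp_sub, ← Real.exp_sum, ← mul_sub,
    ← Finset.sum_sub_distrib, Finset.mul_sum]
  rfl

theorem Zf_pos {ρ : Type*} [Fintype ρ] [DecidableEq ρ]
    (M : Matrix ρ (Fin n) (ZMod 2)) (e : Fin n → ZMod 2) (K : ℝ) : 0 < Zf M e K :=
  Finset.sum_pos (fun _ _ => Real.exp_pos _) Finset.univ_nonempty

theorem Zf_eq_card_ker_mul_sum {ρ : Type*} [Fintype ρ] [DecidableEq ρ]
    (M : Matrix ρ (Fin n) (ZMod 2)) (e : Fin n → ZMod 2) (K : ℝ) :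
    Zf M e K = Nat.card (LinearMap.ker M.vecMulLinear) *
      ∑ c ∈ univ.image (· ᵥ* M), boltzmannWeight K (e + c) := by
  rw [← nsmul_eq_mul]
  convert M.vecMulLinear.toAddMonoidHom.sum_comp_eq_card_ker_nsmul
    fun c => boltzmannWeight K (e + c)
  simp only [Zf, boltzmannWeight, Pi.add_apply, ZMod.neg_one_pow_val_add, pow_add]
  all_goals rfl

theorem davg_mono {p : ℝ} (hp0 : 0 ≤ p) (hp1 : p ≤ 1) {X Y : (Fin n → ZMod 2) → ℝ}
    (hXY : ∀ e, X e ≤ Y e) : davg p X ≤ davg p Y :=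
  Finset.sum_le_sum fun e _ => mul_le_mul_of_nonneg_left (hXY e)
    (mul_nonneg (pow_nonneg hp0 _) (pow_nonneg (sub_nonneg.mpr hp1) _))

theorem davg_finset_sum {ι : Type*} (p : ℝ) (s : Finset ι)
    (X : ι → (Fin n → ZMod 2) → ℝ) :
    davg p (fun e => ∑ i ∈ s, X i e) = ∑ i ∈ s, davg p (X i) := by
  simp only [davg, Finset.mul_sum]
  exact Finset.sum_comm

theorem davg_prod (p : ℝ) (f : Fin n → ZMod 2 → ℝ) :
    davg p (fun e => ∏ b, f b (e b)) = ∏ b, ((1 - p) * f b 0 + p * f b 1) := by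
  have hweight : ∀ e : Fin n → ZMod 2, p ^ hammingNorm e * (1 - p) ^ (n - hammingNorm e) =
      ∏ b, if e b = 0 then 1 - p else p := by
    intro e
    rw [Finset.prod_ite, Finset.prod_const, Finset.prod_const, mul_comm, hammingNorm]
    congr 2
    have := Finset.card_filter_add_card_filter_not (s := univ) (fun b => e b = 0)
    rw [Finset.card_univ, Fintype.card_fin] at this
    simp only [ne_eq] at *
    omega
  simp only [davg, hweight, ← Finset.prod_mul_distrib]
  rw [← Fintype.prod_sum fun b x => (if x = 0 then 1 - p else p) * f b x]
  refine Finset.prod_congr rfl fun b _ => ?_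
  rw [show (univ : Finset (ZMod 2)) = {0, 1} from rfl, Finset.sum_pair zero_ne_one]
  simp

theorem davg_boltzmannWeight_add_div (K p : ℝ) (c : Fin n → ZMod 2) :
    davg p (fun e => boltzmannWeight K (e + c) / boltzmannWeight K e) =
      (Real.exp (-(2 * K)) * (1 - p) + Real.exp (2 * K) * p) ^ hammingNorm c := by
  simp only [boltzmannWeight_add_div]
  rw [davg_prod p fun b x => Real.exp (K * ((-1) ^ (x + c b).val - (-1) ^ x.val))]
  have hfactor : ∀ x : ZMod 2,
      (1 - p) * Real.exp (K * ((-1) ^ (0 + x).val - (-1) ^ (0 : ZMod 2).val)) +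
        p * Real.exp (K * ((-1) ^ (1 + x).val - (-1) ^ (1 : ZMod 2).val)) =
      if x = 0 then 1 else Real.exp (-(2 * K)) * (1 - p) + Real.exp (2 * K) * p := by
    intro x
    have h11 : (1 + 1 : ZMod 2) = 0 := rfl
    have hval1 : (1 : ZMod 2).val = 1 := rfl
    rcases (by decide : ∀ x : ZMod 2, x = 0 ∨ x = 1) x with rfl | rfl
    · simp [hval1]
    · simp only [zero_add, hval1, pow_one, ZMod.val_zero, pow_zero, h11, sub_neg_eq_add,
        one_ne_zero, ↓reduceIte]
      ring_nf
  simp only [hfactor, Finset.prod_ite, Finset.prod_const_one, one_mul, Finset.prod_const,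
    hammingNorm]

end

namespace IsAdaptedDual

variable {rG rH k n : ℕ} {G : Matrix (Fin rG) (Fin n) (ZMod 2)}
  {H : Matrix (Fin rH) (Fin n) (ZMod 2)} {Hs : Matrix (Fin rG ⊕ Fin k) (Fin n) (ZMod 2)}

theorem range_vecMulLinear_le (hHs : IsAdaptedDual G H Hs) :
    LinearMap.range G.vecMulLinear ≤ LinearMap.range Hs.vecMulLinear := by
  rintro _ ⟨a, rfl⟩
  refine ⟨Sum.elim a 0, ?_⟩
  ext j
  simp [Matrix.vecMul, dotProduct, Fintype.sum_sum_type, hHs.1]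

theorem natCard_ker_vecMulLinear_eq (hHs : IsAdaptedDual G H Hs)
    (hk : k = n - G.rank - H.rank) :
    Nat.card (LinearMap.ker Hs.vecMulLinear) = Nat.card (LinearMap.ker G.vecMulLinear) := by
  rw [Module.natCard_eq_pow_finrank (K := ZMod 2) (V := LinearMap.ker Hs.vecMulLinear),
    Module.natCard_eq_pow_finrank (K := ZMod 2) (V := LinearMap.ker G.vecMulLinear)]
  congr 1
  have hnullityG := LinearMap.finrank_range_add_finrank_ker G.vecMulLinear
  have hnullityHs := LinearMap.finrank_range_add_finrank_ker Hs.vecMulLinear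
  have hnullityH := LinearMap.finrank_range_add_finrank_ker H.mulVecLin
  have hrankG : Module.finrank (ZMod 2) (LinearMap.range G.vecMulLinear) = G.rank := by
    rw [← Matrix.rank_transpose, Matrix.rank, Matrix.mulVecLin_transpose]
  have hle := Submodule.finrank_mono hHs.range_vecMulLinear_le
  rw [hHs.2] at hnullityHs hle
  simp only [Module.finrank_fintype_fun_eq_card, Fintype.card_fin, Fintype.card_sum] at *
  rw [← Matrix.rank] at hnullityH
  omega

theorem deltaF_le_sum_boltzmannWeight_div (hHs : IsAdaptedDual G H Hs)
    (hk : k = n - G.rank - H.rank) (e : Fin n → ZMod 2) (K : ℝ) :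
    deltaF G Hs e K ≤ ∑ c ∈ univ.filter (fun c => H *ᵥ c = 0 ∧ ¬ ∃ α, α ᵥ* G = c),
      boltzmannWeight K (e + c) / boltzmannWeight K e := by
  have hcodes : univ.image (· ᵥ* Hs) = univ.filter (fun c => H *ᵥ c = 0) := by
    ext c
    simpa using SetLike.ext_iff.mp hHs.2 c
  have hsub : univ.image (· ᵥ* G) ⊆ univ.image (· ᵥ* Hs) := fun c hc => by
    simpa using hHs.range_vecMulLinear_le (by simpa using hc)
  have hm : (Nat.card (LinearMap.ker G.vecMulLinear) : ℝ) ≠ 0 :=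
    Nat.cast_ne_zero.mpr Nat.card_pos.ne'
  rw [deltaF, ← Real.log_div (Zf_pos Hs e K).ne' (Zf_pos G e K).ne', Zf_eq_card_ker_mul_sum,
    Zf_eq_card_ker_mul_sum, hHs.natCard_ker_vecMulLinear_eq hk, mul_div_mul_left _ _ hm]
  convert Real.log_sum_div_sum_le hsub (fun c _ => boltzmannWeight_pos K (e + c))
    (mem_image.mpr ⟨0, mem_univ _, zero_vecMul G⟩) using 3
  · ext c; simp [hcodes]
  · rw [add_zero]

end IsAdaptedDual

theorem stmt10_general {rG rH k n : ℕ} (G : Matrix (Fin rG) (Fin n) (ZMod 2))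
    (H : Matrix (Fin rH) (Fin n) (ZMod 2))
    (hk : k = n - G.rank - H.rank)
    (Hs : Matrix (Fin rG ⊕ Fin k) (Fin n) (ZMod 2))
    (hHs : IsAdaptedDual G H Hs)
    (K p : ℝ) (hp0 : 0 ≤ p) (hp1 : p ≤ 1)
    (C : ℝ) (hC : C = Real.exp (-(2 * K)) * (1 - p) + Real.exp (2 * K) * p) :
    davg p (fun e => deltaF G Hs e K) ≤
      ∑ c : Fin n → ZMod 2,
        if H.mulVec c = 0 ∧ ¬ (∃ α, Matrix.vecMul α G = c) then C ^ hammingNorm c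
        else 0 := by
  rw [← Finset.sum_filter]
  calc davg p (fun e => deltaF G Hs e K)
      ≤ davg p (fun e => ∑ c ∈ univ.filter (fun c => H *ᵥ c = 0 ∧ ¬ ∃ α, α ᵥ* G = c),
          boltzmannWeight K (e + c) / boltzmannWeight K e) :=
        davg_mono hp0 hp1 (hHs.deltaF_le_sum_boltzmannWeight_div hk · K)
    _ = _ := by
        rw [davg_finset_sum]
        simp only [davg_boltzmannWeight_add_div, hC]

/-- The disorder-averaged homological difference is bounded by a sum over nontrivial
codewords of `C^{|c|}` with `C = e^{−2K}(1−p) + e^{2K}p`. -/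
theorem stmt10 {rG rH k n : ℕ} (G : Matrix (Fin rG) (Fin n) (ZMod 2))
    (H : Matrix (Fin rH) (Fin n) (ZMod 2)) (hGH : G * Hᵀ = 0)
    (hk : k = n - G.rank - H.rank)
    (Hs : Matrix (Fin rG ⊕ Fin k) (Fin n) (ZMod 2))
    (hHs : IsAdaptedDual G H Hs)
    (K p : ℝ) (hK : 0 ≤ K) (hp0 : 0 ≤ p) (hp1 : p ≤ 1)
    (C : ℝ) (hC : C = Real.exp (-(2 * K)) * (1 - p) + Real.exp (2 * K) * p) :
    davg p (fun e => deltaF G Hs e K) ≤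
      ∑ c : Fin n → ZMod 2,
        if H.mulVec c = 0 ∧ ¬ (∃ α, Matrix.vecMul α G = c) then C ^ hammingNorm c
        else 0 :=
  stmt10_general G H hk Hs hHs K p hp0 hp1 C hC
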